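/- Let A be a unital C*-algebra and a, b ∈ A. With R_a = (1 + a*a)⁻¹ and R_b = (1 + b*b)⁻¹, one has ‖a − b‖ ≤ (1 + ‖a‖²)·(‖aR_a − bR_b‖ + ‖b‖·‖R_a − R_b‖); in particular ‖a − b‖ ≤ (1 + ‖a‖²)(1 + ‖b‖)·max{‖R_a − R_b‖, ‖aR_a − bR_b‖}. -/

import Mathlib

/-! Since `R_a (1 + a*a) = 1`, one has `a - b = ((a - b) R_a)(1 + a*a)`, and
`(a - b) R_a = (a R_a - b R_b) - b (R_a - R_b)`; the C*-identity bounds `‖1 + a*a‖` by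
`1 + ‖a‖²`. -/

lemma isUnit_one_add_star_mul_self {A : Type*} [CStarAlgebra A] (a : A) :
    IsUnit (1 + star a * a) := by
  let _ := CStarAlgebra.spectralOrder A
  have _ := CStarAlgebra.spectralOrderedRing A
  exact (isStrictlyPositive_one.add_nonneg (star_mul_self_nonneg a)).isUnit

lemma norm_one_add_star_mul_self_le {A : Type*} [NormedRing A] [StarRing A] [CStarRing A]
    (a : A) : ‖1 + star a * a‖ ≤ 1 + ‖a‖ ^ 2 := by
  nontriviality A
  calc ‖1 + star a * a‖ ≤ ‖(1 : A)‖ + ‖star a * a‖ := norm_add_le _ _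
    _ = 1 + ‖a‖ ^ 2 := by rw [norm_one, CStarRing.norm_star_mul_self, sq]

lemma norm_le_norm_mul_mul_norm_of_mul_eq_one {R : Type*} [SeminormedRing R] {r u : R}
    (h : r * u = 1) (x : R) : ‖x‖ ≤ ‖x * r‖ * ‖u‖ :=
  calc ‖x‖ = ‖x * r * u‖ := by rw [mul_assoc, h, mul_one]
    _ ≤ ‖x * r‖ * ‖u‖ := norm_mul_le _ _

lemma norm_sub_mul_le_norm_sub_add_norm_mul_norm_sub {R : Type*} [NonUnitalSeminormedRing R]
    (a b r s : R) :
    ‖(a - b) * r‖ ≤ ‖a * r - b * s‖ + ‖b‖ * ‖r - s‖ :=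
  calc ‖(a - b) * r‖ = ‖(a * r - b * s) - b * (r - s)‖ := by noncomm_ring
    _ ≤ ‖a * r - b * s‖ + ‖b * (r - s)‖ := norm_sub_le _ _
    _ ≤ ‖a * r - b * s‖ + ‖b‖ * ‖r - s‖ := by grw [norm_mul_le]

lemma add_mul_le_one_add_mul_max {x y c : ℝ} (hc : 0 ≤ c) : x + c * y ≤ (1 + c) * max y x :=
  calc x + c * y ≤ max y x + c * max y x := by gcongr <;> simp
    _ = (1 + c) * max y x := by ring

/-- Let `A` be a unital C*-algebra and `a, b ∈ A`. With `R_a = (1 + a*a)⁻¹` and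
`R_b = (1 + b*b)⁻¹`, one has
`‖a − b‖ ≤ (1 + ‖a‖²)·(‖aR_a − bR_b‖ + ‖b‖·‖R_a − R_b‖)`; in particular
`‖a − b‖ ≤ (1 + ‖a‖²)(1 + ‖b‖)·max{‖R_a − R_b‖, ‖aR_a − bR_b‖}`. -/
theorem stmt_12 {A : Type*} [CStarAlgebra A] (a b : A) :
    ‖a - b‖ ≤ (1 + ‖a‖ ^ 2) *
        (‖a * Ring.inverse (1 + star a * a) - b * Ring.inverse (1 + star b * b)‖ +
          ‖b‖ * ‖Ring.inverse (1 + star a * a) - Ring.inverse (1 + star b * b)‖) ∧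
    ‖a - b‖ ≤ (1 + ‖a‖ ^ 2) * (1 + ‖b‖) *
        max ‖Ring.inverse (1 + star a * a) - Ring.inverse (1 + star b * b)‖
          ‖a * Ring.inverse (1 + star a * a) - b * Ring.inverse (1 + star b * b)‖ := by
  set Ra := Ring.inverse (1 + star a * a)
  set Rb := Ring.inverse (1 + star b * b)
  have hRa : Ra * (1 + star a * a) = 1 :=
    Ring.inverse_mul_cancel _ (isUnit_one_add_star_mul_self a)
  have h1 : ‖a - b‖ ≤ (1 + ‖a‖ ^ 2) * (‖a * Ra - b * Rb‖ + ‖b‖ * ‖Ra - Rb‖) :=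
    calc ‖a - b‖ ≤ ‖(a - b) * Ra‖ * ‖1 + star a * a‖ :=
          norm_le_norm_mul_mul_norm_of_mul_eq_one hRa _
      _ ≤ (‖a * Ra - b * Rb‖ + ‖b‖ * ‖Ra - Rb‖) * (1 + ‖a‖ ^ 2) := by
          gcongr
          exacts [norm_sub_mul_le_norm_sub_add_norm_mul_norm_sub a b Ra Rb, norm_one_add_star_mul_self_le a]
      _ = (1 + ‖a‖ ^ 2) * (‖a * Ra - b * Rb‖ + ‖b‖ * ‖Ra - Rb‖) := mul_comm _ _
  refine ⟨h1, h1.trans ?_⟩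
  rw [mul_assoc]
  gcongr
  exact add_mul_le_one_add_mul_max (norm_nonneg b)
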